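/- arXiv:2308.01528 — 5 statements merged into one kernel-verified Lean document; each statement's English description precedes it below -/
import Mathlib

section
/- For all real t with 0 ≤ t < 1, the function F1(t) := ((t^2-1)/(2t))·ln|(t+1)/(t-1)| + 1 (with F1(0):=0) satisfies F1(t) = ∑_{n=1}^∞ 2t^{2n}/(4n^2-1). -/
noncomputable def F1 (t : ℝ) : ℝ :=
  if t = 0 then 0 else ((t^2 - 1)/(2*t)) * Real.log |(t+1)/(t-1)| + 1

/-!
Since `2 / (4(n+1)² - 1) = 1 / (2n+1) - 1 / (2n+3)`, the series splits into `t · ∑ t^(2k+1)/(2k+1)`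
minus `t⁻¹` times the same odd-power series without its first term. That odd-power series is the
Taylor series of `artanh t = ½ log ((1+t)/(1-t))`, so the sum is `(t - t⁻¹) artanh t + 1 = F1 t`.
-/

open Real

lemma Real.hasSum_artanh_of_abs_lt_one {x : ℝ} (hx : |x| < 1) :
    HasSum (fun k : ℕ => x ^ (2 * k + 1) / (2 * k + 1)) (artanh x) := by
  obtain ⟨hx₁, hx₂⟩ := abs_lt.mp hx
  rw [artanh_eq_half_log ⟨hx₁.le, hx₂.le⟩, log_div (by linarith) (by linarith)]
  exact ((hasSum_log_sub_log_of_abs_lt_one hx).mul_left (1 / 2)).congr_fun fun k => by ring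

lemma hasSum_two_pow_div_four_mul_sq_sub_one {t A : ℝ} (ht : t ≠ 0)
    (hA : HasSum (fun k : ℕ => t ^ (2 * k + 1) / (2 * k + 1)) A) :
    HasSum (fun n : ℕ => 2 * t ^ (2 * (n + 1)) / (4 * ((n : ℝ) + 1) ^ 2 - 1))
      ((t - t⁻¹) * A + 1) := by
  have hA_tail : HasSum (fun k : ℕ => t ^ (2 * k + 3) / (2 * k + 3)) (A - t) := by
    have h := (hasSum_nat_add_iff' 1).mpr hA
    simp only [Finset.sum_range_one, Nat.cast_zero, mul_zero, zero_add, pow_one, div_one] at h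
    exact h.congr_fun fun k => by push_cast; ring_nf
  have hsum : (t - t⁻¹) * A + 1 = t * A - t⁻¹ * (A - t) := by
    field_simp
    ring
  rw [hsum]
  refine ((hA.mul_left t).sub (hA_tail.mul_left t⁻¹)).congr_fun fun n => ?_
  have h₁ : (2 * (n : ℝ) + 1) ≠ 0 := by positivity
  have h₃ : (2 * (n : ℝ) + 3) ≠ 0 := by positivity
  have h₄ : 4 * ((n : ℝ) + 1) ^ 2 - 1 = (2 * n + 1) * (2 * n + 3) := by ring
  rw [h₄]
  field_simp
  ring

lemma F1_eq_artanh {t : ℝ} (ht : t ≠ 0) (ht_abs : |t| < 1) :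
    F1 t = (t - t⁻¹) * artanh t + 1 := by
  obtain ⟨ht₁, ht₂⟩ := abs_lt.mp ht_abs
  have hquot : |(t + 1) / (t - 1)| = (1 + t) / (1 - t) := by
    rw [abs_div, abs_of_pos (by linarith : 0 < t + 1), abs_of_neg (by linarith : t - 1 < 0)]
    ring
  rw [F1, if_neg ht, hquot, artanh_eq_half_log ⟨ht₁.le, ht₂.le⟩]
  field_simp

lemma hasSum_F1 {t : ℝ} (ht : |t| < 1) :
    HasSum (fun n : ℕ => 2 * t ^ (2 * (n + 1)) / (4 * ((n : ℝ) + 1) ^ 2 - 1)) (F1 t) := by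
  rcases eq_or_ne t 0 with rfl | ht₀
  · simp [F1]
  · rw [F1_eq_artanh ht₀ ht]
    exact hasSum_two_pow_div_four_mul_sq_sub_one ht₀ (hasSum_artanh_of_abs_lt_one ht)

theorem stmt_0 (t : ℝ) (ht0 : 0 ≤ t) (ht1 : t < 1) :
    F1 t = ∑' n : ℕ, 2 * t^(2*(n+1)) / (4*((n:ℝ)+1)^2 - 1) :=
  (hasSum_F1 (abs_lt.mpr ⟨by linarith, ht1⟩)).tsum_eq.symm
end

section
/- For all x, y > 0 with x ≠ y, (x/y + y/x)·ln|(x+y)/(x−y)| − 2 ≥ 0. -/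
/-!
Assume `y < x` (the expression is symmetric in `x`, `y`) and put `t = y / x ∈ (0, 1)`. Then
`(x + y) / (x - y) = (1 + t) / (1 - t)`, whose logarithm is `2 artanh t = 2 (t + t³/3 + ⋯) ≥ 2t`,
while `x / y + y / x = 1 / t + t`; so the product is at least `2 + 2t² ≥ 2`.
-/

open Real

lemma two_mul_le_log_one_add_sub_log_one_sub {t : ℝ} (h0 : 0 ≤ t) (h1 : t < 1) :
    2 * t ≤ log (1 + t) - log (1 - t) := by
  have hsum := hasSum_log_sub_log_of_abs_lt_one (abs_lt.mpr ⟨by linarith, h1⟩)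
  simpa using le_hasSum hsum 0 fun k _ => by positivity

lemma two_le_mul_log_div_of_lt {x y : ℝ} (hy : 0 < y) (hxy : y < x) :
    2 ≤ (x / y + y / x) * log ((x + y) / (x - y)) := by
  have hx : 0 < x := hy.trans hxy
  set t := y / x with ht
  have ht0 : 0 < t := div_pos hy hx
  have ht1 : t < 1 := (div_lt_one hx).mpr hxy
  have hquot : (x + y) / (x - y) = (1 + t) / (1 - t) := by
    rw [ht]; field_simp
  have hcoef : x / y + y / x = t⁻¹ + t := by
    rw [ht, inv_div]
  rw [hquot, hcoef, log_div (by linarith) (by linarith)]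
  calc 2 ≤ (t⁻¹ + t) * (2 * t) := by
        field_simp; nlinarith
    _ ≤ (t⁻¹ + t) * (log (1 + t) - log (1 - t)) := by
        gcongr; exact two_mul_le_log_one_add_sub_log_one_sub ht0.le ht1

theorem stmt_11 (x y : ℝ) (hx : 0 < x) (hy : 0 < y) (hxy : x ≠ y) :
    0 ≤ (x/y + y/x) * Real.log |(x+y)/(x-y)| - 2 := by
  wlog hlt : y < x generalizing x y
  · have hsymm : |(y + x) / (y - x)| = |(x + y) / (x - y)| := by
      rw [abs_div, abs_div, abs_sub_comm, add_comm]
    have := this y x hy hx hxy.symm (lt_of_le_of_ne (not_lt.mp hlt) hxy)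
    rwa [hsymm, add_comm (y / x)] at this
  have hpos : 0 < (x + y) / (x - y) := div_pos (by linarith) (by linarith)
  rw [abs_of_pos hpos]
  linarith [two_le_mul_log_div_of_lt hy hlt]
end

section
/- For any measurable g : [0,∞) → ℝ with 1 ≤ g(x) ≤ 1 + x²/2 for all x ≥ 0 (for instance g1(x) := min{1 + x²/2, 1 + C|x|} for any fixed constant C > 0), one has (1/g(x))·exp(2∫₀ˣ (1−g(y))/(y·g(y)) dy) ≥ 4/(2+x²)² for all x > 0. -/
open MeasureTheory intervalIntegral Real

theorem stmt_12 (g : ℝ → ℝ) (hmeas : Measurable g)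
    (hg : ∀ x ≥ 0, 1 ≤ g x ∧ g x ≤ 1 + x^2/2) :
    ∀ x > 0,
      (1 / g x) * Real.exp (2 * ∫ y in (0:ℝ)..x, (1 - g y)/(y * g y)) ≥
        4/(2 + x^2)^2 := by
  intro x hx
  have hx0 : (0:ℝ) ≤ x := hx.le
  set f : ℝ → ℝ := fun y => (1 - g y)/(y * g y) with hf
  set h : ℝ → ℝ := fun y => -y/(2+y^2) with hh
  have hcont : Continuous h := by
    apply Continuous.div (by continuity) (by continuity)
    intro y; positivity
  have hhint : IntervalIntegrable h volume 0 x := hcont.intervalIntegrable 0 x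
  have hfmeas : Measurable f := (measurable_const.sub hmeas).div (measurable_id.mul hmeas)
  have hfint : IntervalIntegrable f volume 0 x := by
    rw [intervalIntegrable_iff_integrableOn_Ioc_of_le hx0]
    apply Integrable.mono' (g := fun _ => x/2)
      (integrableOn_const measure_Ioc_lt_top.ne)
      hfmeas.aestronglyMeasurable
    filter_upwards [ae_restrict_mem measurableSet_Ioc] with y hy
    obtain ⟨hy0, hyx⟩ := hy
    obtain ⟨hg1, hg2⟩ := hg y hy0.le
    rw [Real.norm_eq_abs, hf]
    simp only
    rw [abs_div, abs_of_nonpos (by linarith), abs_of_pos (by nlinarith)]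
    rw [div_le_iff₀ (by nlinarith)]
    nlinarith [mul_nonneg (mul_nonneg hx0 hy0.le) (sub_nonneg.2 hg1),
      mul_nonneg hy0.le (sub_nonneg.2 hyx), sq_nonneg y]
  have hmono : ∫ y in (0:ℝ)..x, h y ≤ ∫ y in (0:ℝ)..x, f y := by
    apply intervalIntegral.integral_mono_on hx0 hhint hfint
    intro y hy
    obtain ⟨hy0, hyx⟩ := hy
    rcases eq_or_lt_of_le hy0 with rfl | hy0'
    · simp [hf, hh]
    · obtain ⟨hg1, hg2⟩ := hg y hy0
      rw [hh, hf]; simp only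
      rw [neg_div, neg_le, ← neg_div]
      rw [div_le_div_iff₀ (by nlinarith) (by positivity)]
      nlinarith
  have hcalc : ∫ y in (0:ℝ)..x, h y = -(1/2) * (Real.log (2+x^2) - Real.log 2) := by
    have hderiv : ∀ y ∈ Set.uIcc (0:ℝ) x,
        HasDerivAt (fun t => -(1/2) * Real.log (2+t^2)) (h y) y := by
      intro y _
      have h1 : HasDerivAt (fun t : ℝ => 2+t^2) (2*y) y := by
        simpa using ((hasDerivAt_pow 2 y).const_add (2:ℝ))
      have h2 := (h1.log (by positivity)).const_mul (-(1/2):ℝ)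
      refine h2.congr_deriv ?_
      rw [hh]
      have : (2:ℝ) + y^2 ≠ 0 := by positivity
      field_simp
    rw [intervalIntegral.integral_eq_sub_of_hasDerivAt hderiv hhint]
    norm_num
    ring
  have hgx := hg x hx0
  have hgpos : (0:ℝ) < g x := by linarith [hgx.1]
  have h1 : 2/(2+x^2) ≤ 1/g x := by
    rw [div_le_div_iff₀ (by positivity) hgpos]
    nlinarith [hgx.2]
  have h2 : 2/(2+x^2) ≤ Real.exp (2 * ∫ y in (0:ℝ)..x, f y) := by
    have hlog : Real.log (2/(2+x^2)) ≤ 2 * ∫ y in (0:ℝ)..x, f y := by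
      rw [Real.log_div (by norm_num) (by positivity)]
      have : Real.log 2 - Real.log (2+x^2) = 2 * ∫ y in (0:ℝ)..x, h y := by
        rw [hcalc]; ring
      rw [this]
      linarith
    calc 2/(2+x^2) = Real.exp (Real.log (2/(2+x^2))) := (Real.exp_log (by positivity)).symm
      _ ≤ _ := Real.exp_le_exp.2 hlog
  have hmul := mul_le_mul h1 h2 (by positivity) (by positivity)
  calc (4:ℝ)/(2+x^2)^2 = (2/(2+x^2))*(2/(2+x^2)) := by field_simp; ring
    _ ≤ (1/g x) * Real.exp (2 * ∫ y in (0:ℝ)..x, f y) := hmul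
end

section
/- Suppose f : [0,∞) → ℝ is continuous, non-increasing, with f(0) = 1, 0 ≤ f ≤ 1, and s ↦ f(√s) convex on [0,∞). Then for every x > 0 and y ≥ 0, 1 − f(y) ≤ min{y², 1−f(x)} + min{y²·(1−f(x))/x², 1}, provided additionally f(y) ≥ (1+y²/2)^{-2} for all y ≥ 0. -/
/-!
For `y ≤ x` the bound follows from monotonicity together with `1 - f y ≤ y²`, which is the
elementary inequality `1 - y² ≤ (1 + y²/2)⁻²`. For `x < y` it follows from convexity of
`s ↦ f (√s)`: its secant slopes from `0`, `(f (√s) - f 0) / s`, increase in `s`, and evaluating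
at `s = x²` and `s = y²` gives `1 - f y ≤ y² (1 - f x) / x²`.
-/

open Set

lemma one_sub_sq_le_one_add_sq_div_two_zpow_neg_two (y : ℝ) :
    1 - y ^ 2 ≤ (1 + y ^ 2 / 2) ^ (-2 : ℤ) := by
  have hpos : (0 : ℝ) < (1 + y ^ 2 / 2) ^ 2 := by positivity
  rw [zpow_neg, zpow_ofNat, ← one_div, le_div_iff₀ hpos]
  nlinarith [sq_nonneg y, sq_nonneg (y ^ 2), pow_nonneg (sq_nonneg y) 3]

lemma sub_le_sq_mul_sub_div_sq_of_convexOn_comp_sqrt {f : ℝ → ℝ}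
    (hconv : ConvexOn ℝ (Ici 0) (fun s => f (√s))) {x y : ℝ} (hx : 0 < x) (hxy : x ≤ y) :
    f 0 - f y ≤ y ^ 2 * (f 0 - f x) / x ^ 2 := by
  have hy : 0 < y := hx.trans_le hxy
  have hslope := hconv.secant_mono (a := 0) (x := x ^ 2) (y := y ^ 2) self_mem_Ici
    (sq_nonneg x) (sq_nonneg y) (by positivity) (by positivity) (by gcongr)
  simp only [Real.sqrt_sq hx.le, Real.sqrt_sq hy.le, Real.sqrt_zero, sub_zero] at hslope
  rw [div_le_div_iff₀ (by positivity) (by positivity)] at hslope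
  rw [le_div_iff₀ (by positivity)]
  linarith

theorem stmt_18_general (f : ℝ → ℝ)
    (hmono : AntitoneOn f (Set.Ici 0))
    (hf0 : f 0 = 1)
    (hbound : ∀ y ≥ 0, (1 + y^2/2)^(-2:ℤ) ≤ f y ∧ f y ≤ 1)
    (hconv : ConvexOn ℝ (Set.Ici 0) (fun s => f (Real.sqrt s))) :
    ∀ x > 0, ∀ y ≥ 0,
      1 - f y ≤ min (y^2) (1 - f x) + min (y^2 * (1 - f x)/x^2) 1 := by
  intro x hx y hy
  have hfx : f x ≤ 1 := (hbound x hx.le).2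
  have hfy : 0 ≤ f y := le_trans (by positivity) (hbound y hy).1
  rcases le_or_gt y x with hyx | hxy
  · have hsq : 1 - f y ≤ y ^ 2 :=
      by linarith [one_sub_sq_le_one_add_sq_div_two_zpow_neg_two y, (hbound y hy).1]
    have hmono_xy : f x ≤ f y := hmono hy hx.le hyx
    have hmin_nonneg : 0 ≤ min (y ^ 2 * (1 - f x) / x ^ 2) 1 :=
      le_min (div_nonneg (mul_nonneg (sq_nonneg y) (sub_nonneg.2 hfx)) (sq_nonneg x)) zero_le_one
    linarith [le_min hsq (by linarith : 1 - f y ≤ 1 - f x)]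
  · have hsecant := sub_le_sq_mul_sub_div_sq_of_convexOn_comp_sqrt hconv hx hxy.le
    rw [hf0] at hsecant
    have hmin_nonneg : 0 ≤ min (y ^ 2) (1 - f x) := le_min (sq_nonneg y) (by linarith)
    linarith [le_min hsecant (by linarith : 1 - f y ≤ 1)]

theorem stmt_18 (f : ℝ → ℝ)
    (hcont : ContinuousOn f (Set.Ici 0))
    (hmono : AntitoneOn f (Set.Ici 0))
    (hf0 : f 0 = 1)
    (hbound : ∀ y ≥ 0, (1 + y^2/2)^(-2:ℤ) ≤ f y ∧ f y ≤ 1)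
    (hconv : ConvexOn ℝ (Set.Ici 0) (fun s => f (Real.sqrt s))) :
    ∀ x > 0, ∀ y ≥ 0,
      1 - f y ≤ min (y^2) (1 - f x) + min (y^2 * (1 - f x)/x^2) 1 :=
  stmt_18_general f hmono hf0 hbound hconv
end

section
/- Suppose f : [0,∞) → ℝ is continuous with (1+y²/2)^{-2} ≤ f(y) ≤ 1, f non-increasing, f(0)=1, and s ↦ f(√s) convex. Then for every x > 0, (4/3π)·∫₀^∞ (1−f(y))/y² dy ≤ (8(x+1)/(3πx))·(1−f(x))^{1/2}. -/
/-!
Write `g = 1 - f` and `a = g x`. For `y ≤ x`, the lower bound on `f` and monotonicity give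
`g y ≤ min (y ^ 2) a`. For `y ≥ x`, convexity of `f ∘ √` makes the secant slope `g y / y ^ 2`
from `0` nonincreasing, so `g y / y ^ 2 ≤ min (a / x ^ 2) (1 / y ^ 2)`. Since
`∫₀^∞ min (u ^ 2) (v ^ 2 / y ^ 2) dy = 2 u v`, the integral is at most `2 √a + 2 √a / x`.
-/

open Set MeasureTheory Filter

lemma rpow_neg_two_eq_inv_sq {y : ℝ} (hy : 0 ≤ y) : y ^ (-2 : ℝ) = (y ^ 2)⁻¹ := by
  rw [Real.rpow_neg hy, Real.rpow_two]

lemma integrableOn_Ioi_inv_sq {t : ℝ} (ht : 0 < t) :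
    IntegrableOn (fun y : ℝ => (y ^ 2)⁻¹) (Ioi t) :=
  (integrableOn_Ioi_rpow_of_lt (by norm_num : (-2 : ℝ) < -1) ht).congr_fun
    (fun y hy => rpow_neg_two_eq_inv_sq (ht.trans hy).le) measurableSet_Ioi

lemma integral_Ioi_inv_sq {t : ℝ} (ht : 0 < t) : ∫ y in Ioi t, (y ^ 2)⁻¹ = t⁻¹ := by
  rw [← setIntegral_congr_fun measurableSet_Ioi
    (fun y hy => rpow_neg_two_eq_inv_sq (ht.trans hy).le),
    integral_Ioi_rpow_of_lt (by norm_num) ht]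
  norm_num [Real.rpow_neg_one]

lemma integrableOn_Ioi_min_sq_div_sq (u v : ℝ) :
    IntegrableOn (fun y : ℝ => min (u ^ 2) (v ^ 2 / y ^ 2)) (Ioi 0) := by
  have hmeas : AEStronglyMeasurable (fun y : ℝ => min (u ^ 2) (v ^ 2 / y ^ 2)) volume :=
    (by fun_prop : Measurable fun y : ℝ => min (u ^ 2) (v ^ 2 / y ^ 2)).aestronglyMeasurable
  have hnorm : ∀ y, ‖min (u ^ 2) (v ^ 2 / y ^ 2)‖ = min (u ^ 2) (v ^ 2 / y ^ 2) := fun y =>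
    Real.norm_of_nonneg (by positivity)
  rw [← Ioc_union_Ioi_eq_Ioi zero_le_one]
  refine IntegrableOn.union ?_ ?_
  · refine Integrable.mono' (integrableOn_const (C := u ^ 2) measure_Ioc_lt_top.ne)
      hmeas.restrict (Eventually.of_forall fun y => ?_)
    rw [hnorm]; exact min_le_left _ _
  · refine Integrable.mono' ((integrableOn_Ioi_inv_sq one_pos).const_mul (v ^ 2))
      hmeas.restrict (Eventually.of_forall fun y => ?_)
    rw [hnorm, ← div_eq_mul_inv]; exact min_le_right _ _

lemma integral_Ioi_min_sq_div_sq {u v : ℝ} (hu : 0 ≤ u) (hv : 0 ≤ v) :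
    ∫ y in Ioi 0, min (u ^ 2) (v ^ 2 / y ^ 2) = 2 * u * v := by
  rcases hu.eq_or_lt with rfl | hu
  · have hzero : ∀ y : ℝ, min 0 (v ^ 2 / y ^ 2) = 0 := fun y => min_eq_left (by positivity)
    simp [hzero]
  rcases hv.eq_or_lt with rfl | hv
  · simp [sq_nonneg]
  have ht : 0 < v / u := div_pos hv hu
  have hint := integrableOn_Ioi_min_sq_div_sq u v
  have hlow : ∫ y in Ioc 0 (v / u), min (u ^ 2) (v ^ 2 / y ^ 2) = u * v := by
    rw [setIntegral_congr_fun measurableSet_Ioc (g := fun _ => u ^ 2) fun y hy => ?_]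
    · rw [setIntegral_const, Real.volume_real_Ioc_of_le ht.le, smul_eq_mul]
      field_simp; ring
    · refine min_eq_left ((le_div_iff₀ (pow_pos hy.1 2)).2 ?_)
      rw [← mul_pow]
      exact pow_le_pow_left₀ (mul_pos hu hy.1).le ((le_div_iff₀' hu).1 hy.2) 2
  have hhigh : ∫ y in Ioi (v / u), min (u ^ 2) (v ^ 2 / y ^ 2) = u * v := by
    rw [setIntegral_congr_fun measurableSet_Ioi (g := fun y => v ^ 2 * (y ^ 2)⁻¹)
      fun y hy => ?_]
    · rw [integral_const_mul, integral_Ioi_inv_sq ht]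
      field_simp
    · have hy0 : 0 < y := ht.trans hy
      refine (min_eq_right ((div_le_iff₀ (pow_pos hy0 2)).2 ?_)).trans (div_eq_mul_inv _ _)
      rw [← mul_pow]
      exact pow_le_pow_left₀ hv.le ((div_lt_iff₀' hu).1 hy).le 2
  rw [← Ioc_union_Ioi_eq_Ioi ht.le, setIntegral_union (Ioc_disjoint_Ioi le_rfl) measurableSet_Ioi
    (hint.mono_set Ioc_subset_Ioi_self) (hint.mono_set (Ioi_subset_Ioi ht.le)), hlow, hhigh]
  ring

lemma one_sub_le_sq_of_zpow_le {y v : ℝ} (h : (1 + y ^ 2 / 2) ^ (-2 : ℤ) ≤ v) : 1 - v ≤ y ^ 2 := by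
  suffices 1 - y ^ 2 ≤ (1 + y ^ 2 / 2) ^ (-2 : ℤ) by linarith
  rw [zpow_neg, zpow_ofNat, ← one_div, le_div_iff₀ (by positivity)]
  nlinarith [pow_nonneg (sq_nonneg y) 2, pow_nonneg (sq_nonneg y) 3]

lemma antitoneOn_sub_div_sq_of_convexOn_comp_sqrt {f : ℝ → ℝ}
    (hconv : ConvexOn ℝ (Ici 0) (fun s => f √s)) :
    AntitoneOn (fun y => (f 0 - f y) / y ^ 2) (Ioi 0) := by
  intro y hy z hz hyz
  have hsecant := hconv.secant_mono (a := 0) self_mem_Ici (sq_nonneg y) (sq_nonneg z)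
    (pow_pos hy 2).ne' (pow_pos hz 2).ne' (pow_le_pow_left₀ (le_of_lt hy) hyz 2)
  simp only [Real.sqrt_sq (le_of_lt hy), Real.sqrt_sq (le_of_lt hz), Real.sqrt_zero,
    sub_zero] at hsecant
  show (f 0 - f z) / z ^ 2 ≤ (f 0 - f y) / y ^ 2
  rw [← neg_sub (f z), ← neg_sub (f y), neg_div, neg_div]
  exact neg_le_neg hsecant

lemma div_sq_le_min_add_min {g : ℝ → ℝ} (hg_nonneg : ∀ y > 0, 0 ≤ g y)
    (hg_le_one : ∀ y > 0, g y ≤ 1) (hg_le_sq : ∀ y > 0, g y ≤ y ^ 2)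
    (hg_mono : MonotoneOn g (Ioi 0)) (hg_div : AntitoneOn (fun y => g y / y ^ 2) (Ioi 0))
    {x y : ℝ} (hx : 0 < x) (hy : 0 < y) :
    g y / y ^ 2 ≤ min 1 (g x / y ^ 2) + min (g x / x ^ 2) (1 / y ^ 2) := by
  rcases le_total y x with hyx | hxy
  · have hfirst : g y / y ^ 2 ≤ min 1 (g x / y ^ 2) :=
      le_min ((div_le_one (pow_pos hy 2)).2 (hg_le_sq y hy))
        (div_le_div_of_nonneg_right (hg_mono hy hx hyx) (sq_nonneg y))
    have hsecond : 0 ≤ min (g x / x ^ 2) (1 / y ^ 2) :=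
      le_min (div_nonneg (hg_nonneg x hx) (sq_nonneg x)) (by positivity)
    linarith
  · have hfirst : 0 ≤ min 1 (g x / y ^ 2) :=
      le_min zero_le_one (div_nonneg (hg_nonneg x hx) (sq_nonneg y))
    have hsecond : g y / y ^ 2 ≤ min (g x / x ^ 2) (1 / y ^ 2) :=
      le_min (hg_div hx hy hxy) (div_le_div_of_nonneg_right (hg_le_one y hy) (sq_nonneg y))
    linarith

theorem integral_Ioi_div_sq_le {g : ℝ → ℝ} (hg_nonneg : ∀ y > 0, 0 ≤ g y)
    (hg_le_one : ∀ y > 0, g y ≤ 1) (hg_le_sq : ∀ y > 0, g y ≤ y ^ 2)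
    (hg_mono : MonotoneOn g (Ioi 0)) (hg_div : AntitoneOn (fun y => g y / y ^ 2) (Ioi 0))
    {x : ℝ} (hx : 0 < x) :
    ∫ y in Ioi 0, g y / y ^ 2 ≤ 2 * √(g x) + 2 * √(g x) / x := by
  set s := √(g x)
  have hs : s ^ 2 = g x := Real.sq_sqrt (hg_nonneg x hx)
  calc ∫ y in Ioi 0, g y / y ^ 2
      ≤ ∫ y in Ioi 0, (min (1 ^ 2) (s ^ 2 / y ^ 2) + min ((s / x) ^ 2) (1 ^ 2 / y ^ 2)) := by
        refine integral_mono_of_nonneg ?_ ((integrableOn_Ioi_min_sq_div_sq _ _).add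
          (integrableOn_Ioi_min_sq_div_sq _ _)) ?_ <;>
          filter_upwards [ae_restrict_mem measurableSet_Ioi] with y hy
        · exact div_nonneg (hg_nonneg y hy) (sq_nonneg y)
        · simpa only [one_pow, div_pow, hs] using
            div_sq_le_min_add_min hg_nonneg hg_le_one hg_le_sq hg_mono hg_div hx hy
    _ = 2 * 1 * s + 2 * (s / x) * 1 := by
        rw [integral_add (integrableOn_Ioi_min_sq_div_sq _ _) (integrableOn_Ioi_min_sq_div_sq _ _),
          integral_Ioi_min_sq_div_sq zero_le_one (Real.sqrt_nonneg _),
          integral_Ioi_min_sq_div_sq (div_nonneg (Real.sqrt_nonneg _) hx.le) zero_le_one]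
    _ = 2 * s + 2 * s / x := by ring

theorem stmt_19_general (f : ℝ → ℝ)
    (hmono : AntitoneOn f (Set.Ici 0))
    (hf0 : f 0 = 1)
    (hbound : ∀ y ≥ 0, (1 + y^2/2)^(-2:ℤ) ≤ f y ∧ f y ≤ 1)
    (hconv : ConvexOn ℝ (Set.Ici 0) (fun s => f (Real.sqrt s))) :
    ∀ x > 0,
      (4/(3*Real.pi)) * ∫ y in Set.Ioi (0:ℝ), (1 - f y)/y^2 ≤
        (8*(x+1)/(3*Real.pi*x)) * Real.sqrt (1 - f x) := by
  intro x hx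
  have hf_pos : ∀ y ≥ 0, 0 < f y := fun y hy => lt_of_lt_of_le (by positivity) (hbound y hy).1
  have hI := integral_Ioi_div_sq_le (g := fun y => 1 - f y)
    (fun y hy => sub_nonneg.2 (hbound y hy.le).2)
    (fun y hy => by linarith [hf_pos y hy.le])
    (fun y hy => one_sub_le_sq_of_zpow_le (hbound y hy.le).1)
    (fun y hy z hz hyz => sub_le_sub_left (hmono (Ioi_subset_Ici_self hy) (Ioi_subset_Ici_self hz) hyz) 1)
    (by simpa only [hf0] using antitoneOn_sub_div_sq_of_convexOn_comp_sqrt hconv) hx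
  calc (4 / (3 * Real.pi)) * ∫ y in Ioi 0, (1 - f y) / y ^ 2
      ≤ 4 / (3 * Real.pi) * (2 * √(1 - f x) + 2 * √(1 - f x) / x) := by gcongr
    _ = 8 * (x + 1) / (3 * Real.pi * x) * √(1 - f x) := by field_simp; ring

theorem stmt_19 (f : ℝ → ℝ)
    (hcont : ContinuousOn f (Set.Ici 0))
    (hmono : AntitoneOn f (Set.Ici 0))
    (hf0 : f 0 = 1)
    (hbound : ∀ y ≥ 0, (1 + y^2/2)^(-2:ℤ) ≤ f y ∧ f y ≤ 1)
    (hconv : ConvexOn ℝ (Set.Ici 0) (fun s => f (Real.sqrt s))) :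
    ∀ x > 0,
      (4/(3*Real.pi)) * ∫ y in Set.Ioi (0:ℝ), (1 - f y)/y^2 ≤
        (8*(x+1)/(3*Real.pi*x)) * Real.sqrt (1 - f x) :=
  stmt_19_general f hmono hf0 hbound hconv
end
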